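/- arXiv:1004.4560 — 7 statements merged into one kernel-verified Lean document; each statement's English description precedes it below -/
import Mathlib

section
/- Let G = (V, E) be a graph with an umbrella-free ordering σ, let P = (v₁, v₂, …, v_k) be a path of G, and let v_ℓ ∉ V(P) be a vertex with v_k <_σ v_ℓ <_σ v₁ and v_ℓ v_k ∉ E. Then there exist two consecutive vertices v_{i-1} and v_i in P (2 ≤ i ≤ k) such that v_{i-1} v_ℓ ∈ E and v_i <_σ v_ℓ. -/
/-- The linear order on `V` is an umbrella-free ordering of `G`. -/
def UmbrellaFree {V : Type*} [LinearOrder V] (G : SimpleGraph V) : Prop :=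
  ∀ x y z : V, x < y → y < z → G.Adj x z → G.Adj x y ∨ G.Adj y z

/-- A (simple) path of `G`, as a list of distinct vertices with consecutive
vertices adjacent. -/
def IsPathList {V : Type*} (G : SimpleGraph V) (P : List V) : Prop :=
  P.Nodup ∧ P.Chain' G.Adj

/-!
Call a vertex `x` of the path *good* if `vl <_σ x`, or `x <_σ vl` and `x vl ∈ E`. The first vertex
is good and the last is not, so some consecutive pair `x, y` has `x` good and `y` bad; as `vl ∉ P`,
`y <_σ vl` and `y vl ∉ E`. If `vl <_σ x`, the edge `y x` spans `vl`, and umbrella-freeness forces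
`x vl ∈ E`; otherwise `x vl ∈ E` by goodness.
-/

theorem List.exists_getElem_and_not_getElem_succ {α : Type*} (p : α → Prop) :
    ∀ (l : List α) (hne : l ≠ []), p (l.head hne) → ¬ p (l.getLast hne) →
      ∃ i : ℕ, ∃ h : i + 1 < l.length, p (l[i]'(Nat.lt_of_succ_lt h)) ∧ ¬ p l[i + 1]
  | [a], _, hhead, hlast => absurd hhead hlast
  | a :: b :: t, _, hhead, hlast => by
    by_cases hb : p b
    · obtain ⟨i, hi, hpi, hpi'⟩ :=
        exists_getElem_and_not_getElem_succ p (b :: t) (cons_ne_nil b t) hb hlast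
      exact ⟨i + 1, by simpa using hi, hpi, hpi'⟩
    · exact ⟨0, by simp, hhead, hb⟩

/-- Lemma: if `P = (v₁,…,v_k)` is a path, `vℓ ∉ V(P)`, `v_k <_σ vℓ <_σ v₁` and
`vℓ v_k ∉ E`, then there are consecutive vertices `v_{i-1}, v_i` of `P` with
`v_{i-1} vℓ ∈ E` and `v_i <_σ vℓ`. -/
theorem exists_consecutive_straddle {V : Type*} [LinearOrder V] (G : SimpleGraph V)
    (hUF : UmbrellaFree G) (P : List V) (hP : IsPathList G P) (hne : P ≠ [])
    (vl : V) (hnot : vl ∉ P)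
    (h1 : P.getLast hne < vl) (h2 : vl < P.head hne)
    (h3 : ¬ G.Adj vl (P.getLast hne)) :
    ∃ i : ℕ, ∃ h : i + 1 < P.length,
      G.Adj (P.get ⟨i, by omega⟩) vl ∧ P.get ⟨i + 1, h⟩ < vl := by
  obtain ⟨i, hi, hgood, hbad⟩ := P.exists_getElem_and_not_getElem_succ
    (fun x => vl < x ∨ (x < vl ∧ G.Adj x vl)) hne (Or.inl h2)
    (by rintro (h | ⟨-, h⟩); exacts [h1.not_gt h, h3 h.symm])
  simp only [not_or, not_and, not_lt] at hbad
  have hlt : P[i + 1] < vl :=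
    hbad.1.lt_of_ne fun h => hnot (h ▸ List.getElem_mem hi)
  have hadj : G.Adj P[i] vl := by
    rcases hgood with hgt | ⟨-, hadj⟩
    · have hedge : G.Adj P[i + 1] P[i] := (List.isChain_iff_getElem.mp hP.2 i hi).symm
      exact ((hUF _ _ _ hlt hgt hedge).resolve_left (hbad.2 hlt)).symm
    · exact hadj
  exact ⟨i, hi, hadj, hlt⟩
end

section
/- Let σ be an LDFS umbrella-free ordering of a graph, σ′ an induced subordering of σ, and σ″ an LDFS closure of σ′ within σ. Then for every vertex v of σ″ not in σ′, there exists at least one vertex v′ in σ′ such that v <_σ v′ and vv′ ∉ E. -/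
def LDFSOrdering {V : Type*} [LinearOrder V] (G : SimpleGraph V) : Prop :=
  ∀ a b c : V, a < b → b < c → G.Adj a c → ¬ G.Adj a b →
    ∃ d : V, a < d ∧ d < b ∧ G.Adj d b ∧ ¬ G.Adj d c

/-- `T` is an LDFS closure of the induced subordering `S` (within the ambient
ordering σ, i.e. the linear order on `V`): an induced subordering of σ of minimum
cardinality that contains `S` and is itself an LDFS ordering. -/
def IsLDFSClosure {V : Type*} [LinearOrder V] (G : SimpleGraph V) (S T : Finset V) : Prop :=
  S ⊆ T ∧ LDFSOrdering (G.induce (T : Set V)) ∧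
    ∀ T' : Finset V, S ⊆ T' → LDFSOrdering (G.induce (T' : Set V)) → T.card ≤ T'.card

/-- Every vertex of `T \ S` has a non-neighbor above it in `T` (else it could be
erased, contradicting minimality of the LDFS closure). -/
lemma ldfsClosure_exists_nonneighbor_in_T {V : Type*} [Fintype V] [LinearOrder V]
    (G : SimpleGraph V) (S T : Finset V) (hT : IsLDFSClosure G S T)
    (v : V) (hv : v ∈ T) (hvS : v ∉ S) :
    ∃ c ∈ T, v < c ∧ ¬ G.Adj v c := by
  by_contra hcon
  push_neg at hcon
  obtain ⟨hST, hLD, hmin⟩ := hT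
  have hsub : S ⊆ T.erase v := fun s hs =>
    Finset.mem_erase.mpr ⟨fun e => hvS (e ▸ hs), hST hs⟩
  have hLD' : LDFSOrdering (G.induce ((T.erase v : Finset V) : Set V)) := by
    rintro ⟨a, ha⟩ ⟨b, hb⟩ ⟨c, hc⟩ hab hbc hac hnab
    have ha' : a ∈ T := Finset.mem_of_mem_erase (Finset.mem_coe.mp ha)
    have hb' : b ∈ T := Finset.mem_of_mem_erase (Finset.mem_coe.mp hb)
    have hc' : c ∈ T := Finset.mem_of_mem_erase (Finset.mem_coe.mp hc)
    have hab' : a < b := by simpa [Subtype.mk_lt_mk] using hab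
    have hbc' : b < c := by simpa [Subtype.mk_lt_mk] using hbc
    have hac' : G.Adj a c := hac
    have hnab' : ¬ G.Adj a b := hnab
    obtain ⟨⟨d, hd⟩, had, hdb, hAdb, hnAdc⟩ :=
      hLD ⟨a, by simpa using ha'⟩ ⟨b, by simpa using hb'⟩ ⟨c, by simpa using hc'⟩
        (by simpa [Subtype.mk_lt_mk] using hab') (by simpa [Subtype.mk_lt_mk] using hbc')
        hac' hnab'
    have hdT : d ∈ T := by simpa using hd
    have had' : a < d := by simpa [Subtype.mk_lt_mk] using had
    have hdb' : d < b := by simpa [Subtype.mk_lt_mk] using hdb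
    have hdv : d ≠ v := by
      rintro rfl
      exact hnAdc (hcon c hc' (hdb'.trans hbc'))
    refine ⟨⟨d, by simp [Finset.mem_erase, hdv, hdT]⟩, ?_, ?_, ?_, ?_⟩
    · simpa [Subtype.mk_lt_mk] using had'
    · simpa [Subtype.mk_lt_mk] using hdb'
    · exact hAdb
    · exact hnAdc
  have h1 := hmin (T.erase v) hsub hLD'
  have h2 : (T.erase v).card < T.card := Finset.card_erase_lt_of_mem hv
  omega

/-- If σ is an LDFS umbrella-free ordering, `S` an induced subordering and `T` an LDFS
closure of `S` within σ, then every vertex `v ∈ T \ S` has a vertex `v' ∈ S` with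
`v <_σ v'` and `vv' ∉ E`. -/
theorem ldfsClosure_exists_nonneighbor_right {V : Type*} [Fintype V] [LinearOrder V]
    (G : SimpleGraph V) (hUF : UmbrellaFree G) (hLDFS : LDFSOrdering G)
    (S T : Finset V) (hT : IsLDFSClosure G S T)
    (v : V) (hv : v ∈ T) (hvS : v ∉ S) :
    ∃ v' ∈ S, v < v' ∧ ¬ G.Adj v v' := by
  have wf : WellFounded ((· > ·) : V → V → Prop) := Finite.to_wellFoundedGT.wf
  refine wf.induction (C := fun v => v ∈ T → v ∉ S → ∃ v' ∈ S, v < v' ∧ ¬ G.Adj v v')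
    v ?_ hv hvS
  intro v ih hv hvS
  obtain ⟨c, hcT, hvc, hnadj⟩ := ldfsClosure_exists_nonneighbor_in_T G S T hT v hv hvS
  by_cases hcS : c ∈ S
  · exact ⟨c, hcS, hvc, hnadj⟩
  · obtain ⟨v', hv'S, hcv', hnadj'⟩ := ih c hvc hcT hcS
    refine ⟨v', hv'S, hvc.trans hcv', fun hA => ?_⟩
    rcases hUF v c v' hvc hcv' hA with h | h
    exacts [hnadj h, hnadj' h]
end

section
/- Let σ be an LDFS umbrella-free ordering, σ′ an induced subordering of σ, and σ″ any LDFS closure of σ′ within σ. Then the rightmost vertex of σ′ is also the rightmost vertex of σ″. -/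
/-- The rightmost vertex of `S` is also the rightmost vertex of any LDFS closure `T` of `S`. -/
theorem ldfsClosure_max_eq {V : Type*} [Fintype V] [LinearOrder V]
    (G : SimpleGraph V) (hUF : UmbrellaFree G) (hLDFS : LDFSOrdering G)
    (S T : Finset V) (hT : IsLDFSClosure G S T) (hS : S.Nonempty) :
    T.max' (hS.mono hT.1) = S.max' hS := by
  obtain ⟨hST, hLT, hmin⟩ := hT
  set m := T.max' (hS.mono hST) with hm
  by_contra hne
  have hle : S.max' hS ≤ m := Finset.le_max' T _ (hST (S.max'_mem hS))
  have hlt : S.max' hS < m := lt_of_le_of_ne hle (fun h => hne h.symm)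
  -- erase m from T
  have hSsub : S ⊆ T.erase m := by
    intro s hs
    refine Finset.mem_erase.2 ⟨?_, hST hs⟩
    exact ne_of_lt (lt_of_le_of_lt (Finset.le_max' S s hs) hlt)
  have hLDFS' : LDFSOrdering (G.induce ((T.erase m : Finset V) : Set V)) := by
    intro a b c hab hbc hac hnac
    have ha : (a : V) ∈ T := Finset.mem_of_mem_erase a.2
    have hb : (b : V) ∈ T := Finset.mem_of_mem_erase b.2
    have hc : (c : V) ∈ T := Finset.mem_of_mem_erase c.2
    have hbm : (b : V) < m :=
      lt_of_le_of_ne (Finset.le_max' T _ hb) (Finset.mem_erase.1 b.2).1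
    have hab' : ((⟨(a : V), ha⟩ : (T : Set V)) : V) < ((⟨(b : V), hb⟩ : (T : Set V)) : V) := hab
    have hbc' : ((⟨(b : V), hb⟩ : (T : Set V)) : V) < ((⟨(c : V), hc⟩ : (T : Set V)) : V) := hbc
    have hac' : (G.induce (T : Set V)).Adj ⟨(a : V), ha⟩ ⟨(c : V), hc⟩ := hac
    have hnac' : ¬ (G.induce (T : Set V)).Adj ⟨(a : V), ha⟩ ⟨(b : V), hb⟩ := hnac
    obtain ⟨d, had, hdb, hdbAdj, hdc⟩ :=
      hLT ⟨(a : V), ha⟩ ⟨(b : V), hb⟩ ⟨(c : V), hc⟩ hab' hbc' hac' hnac'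
    have hdm : (d : V) ∈ T.erase m :=
      Finset.mem_erase.2 ⟨ne_of_lt (lt_trans hdb hbm), d.2⟩
    refine ⟨⟨(d : V), hdm⟩, had, hdb, hdbAdj, hdc⟩
  have hmem : m ∈ T := Finset.max'_mem T (hS.mono hST)
  have := hmin (T.erase m) hSsub hLDFS'
  have hcard : (T.erase m).card < T.card := Finset.card_erase_lt_of_mem hmem
  omega
end

section
/- Let G be a graph with umbrella-free ordering π, and let π′ = RMN(π) (the ordering produced by the rightmost-neighbor greedy traversal of π). Let x, y ∈ V with xy ∉ E and y <_π x. Then x <_{π′} y. -/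
open Classical in
/-- One run of the RightMost-Neighbor traversal with a fuel parameter: `u` is the set of
unvisited vertices, and the optional argument is the currently visited vertex. From the
current vertex we move to its rightmost (in the linear order σ on `V`) unvisited neighbor
if one exists; otherwise we restart at the rightmost unvisited vertex. -/
noncomputable def rmnAux {V : Type*} [LinearOrder V] (G : SimpleGraph V) :
    ℕ → Finset V → Option V → List V
  | 0, _, _ => []
  | fuel + 1, u, none =>
      if h : u.Nonempty then
        u.max' h :: rmnAux G fuel (u.erase (u.max' h)) (some (u.max' h))
      else []
  | fuel + 1, u, some c =>
      if h : (u.filter (fun w => G.Adj c w)).Nonempty then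
        (u.filter (fun w => G.Adj c w)).max' h ::
          rmnAux G fuel (u.erase ((u.filter (fun w => G.Adj c w)).max' h))
            (some ((u.filter (fun w => G.Adj c w)).max' h))
      else rmnAux G fuel u none

/-- `RMN(σ)`, where σ is the linear order on `V`: the vertex ordering produced by the
rightmost-neighbor greedy traversal. -/
noncomputable def rmn {V : Type*} [Fintype V] [LinearOrder V] (G : SimpleGraph V) : List V :=
  rmnAux G (2 * Fintype.card V + 1) Finset.univ none

/-!
Along the traversal the current vertex `c` is adjacent to every unvisited vertex to its
right. This is vacuous right after a restart at the rightmost unvisited vertex, and after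
moving to the rightmost unvisited neighbour `m` of `c` it survives by umbrella-freeness
applied to `m < w < c`. Consequently, while both `x` and `y` are unvisited, `y` is never
chosen next: a restart picks a vertex `≥ x`, and if `c` is adjacent to `y` then it is also
adjacent to `x` (by the invariant if `c < x`, by umbrella-freeness on `y < x < c`
otherwise), so the rightmost unvisited neighbour of `c` is `≥ x` as well.
-/

open Classical Finset

theorem List.idxOf_lt_idxOf_cons {α : Type*} [BEq α] [LawfulBEq α] {l : List α} {a x y : α}
    (hya : y ≠ a) (h : x ≠ a → l.idxOf x < l.idxOf y) :
    (a :: l).idxOf x < (a :: l).idxOf y := by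
  by_cases hxa : x = a
  · subst hxa
    rw [List.idxOf_cons_self, List.idxOf_cons_ne _ hya.symm]
    exact Nat.succ_pos _
  · rw [List.idxOf_cons_ne _ (Ne.symm hxa), List.idxOf_cons_ne _ (Ne.symm hya)]
    exact Nat.succ_lt_succ (h hxa)

section

variable {V : Type*} [LinearOrder V] (G : SimpleGraph V)

/-- Each unit of fuel visits a vertex, except a failed neighbour search from the current
vertex, after which the restart does; hence two units per unvisited vertex, plus one for the
current vertex. -/
theorem mem_rmnAux (fuel : ℕ) (u : Finset V) (s : Option V)
    (hfuel : 2 * #u + s.isSome.toNat ≤ fuel) {w : V} (hw : w ∈ u) :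
    w ∈ rmnAux G fuel u s := by
  induction fuel generalizing u s with
  | zero => have := card_pos.2 ⟨w, hw⟩; omega
  | succ n ih =>
    have hcard : 0 < #u := card_pos.2 ⟨w, hw⟩
    match s with
    | none =>
      have hu : u.Nonempty := ⟨w, hw⟩
      rw [rmnAux, dif_pos hu]
      by_cases hwm : w = u.max' hu
      · exact hwm ▸ List.mem_cons_self
      · refine List.mem_cons_of_mem _ (ih _ _ ?_ (mem_erase.2 ⟨hwm, hw⟩))
        simp only [Option.isSome_none, Option.isSome_some, Bool.toNat_false,
          Bool.toNat_true, card_erase_of_mem (u.max'_mem hu)] at hfuel ⊢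
        omega
    | some c =>
      rw [rmnAux]
      by_cases hN : (u.filter (fun w => G.Adj c w)).Nonempty
      · rw [dif_pos hN]
        set m := (u.filter (fun w => G.Adj c w)).max' hN
        have hmu : m ∈ u := (mem_filter.1 (max'_mem _ hN)).1
        by_cases hwm : w = m
        · exact hwm ▸ List.mem_cons_self
        · refine List.mem_cons_of_mem _ (ih _ _ ?_ (mem_erase.2 ⟨hwm, hw⟩))
          simp only [Option.isSome_some, Bool.toNat_true, card_erase_of_mem hmu] at hfuel ⊢
          omega
      · rw [dif_neg hN]
        refine ih _ _ ?_ hw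
        simp only [Option.isSome_none, Option.isSome_some, Bool.toNat_false,
          Bool.toNat_true] at hfuel ⊢
        omega

def RmnInvariant (u : Finset V) : Option V → Prop
  | none => True
  | some c => c ∉ u ∧ ∀ w ∈ u, c < w → G.Adj c w

variable {G}

theorem rmnInvariant_restart {u : Finset V} (hu : u.Nonempty) :
    RmnInvariant G (u.erase (u.max' hu)) (some (u.max' hu)) :=
  ⟨notMem_erase _ _, fun w hw hmw =>
    absurd (u.le_max' w (mem_of_mem_erase hw)) (not_le.2 hmw)⟩

theorem rmnInvariant_next (hUF : UmbrellaFree G) {u : Finset V} {c : V}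
    (hinv : RmnInvariant G u (some c)) (hN : (u.filter (fun w => G.Adj c w)).Nonempty) :
    RmnInvariant G (u.erase ((u.filter (fun w => G.Adj c w)).max' hN))
      (some ((u.filter (fun w => G.Adj c w)).max' hN)) := by
  obtain ⟨hcu, hadj⟩ := hinv
  set m := (u.filter (fun w => G.Adj c w)).max' hN
  have hcm : G.Adj c m := (mem_filter.1 (max'_mem _ hN)).2
  refine ⟨notMem_erase _ _, fun w hw hmw => ?_⟩
  have hwu := mem_of_mem_erase hw
  have hncw : ¬ G.Adj c w := fun hcw =>
    absurd (le_max' _ w (mem_filter.2 ⟨hwu, hcw⟩)) (not_le.2 hmw)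
  rcases lt_or_gt_of_ne (fun h : w = c => hcu (h ▸ hwu)) with hwc | hcw
  · exact (hUF m w c hmw hwc hcm.symm).resolve_right fun h => hncw h.symm
  · exact absurd (hadj w hwu hcw) hncw

theorem RmnInvariant.adj_of_adj (hUF : UmbrellaFree G) {u : Finset V} {c x y : V}
    (hinv : RmnInvariant G u (some c)) (hx : x ∈ u) (hne : ¬ G.Adj x y) (hlt : y < x)
    (hcy : G.Adj c y) : G.Adj c x := by
  obtain ⟨hcu, hadj⟩ := hinv
  rcases lt_or_gt_of_ne (fun h : x = c => hcu (h ▸ hx)) with hxc | hcx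
  · exact ((hUF y x c hlt hxc hcy.symm).resolve_left fun h => hne h.symm).symm
  · exact hadj x hx hcx

theorem idxOf_lt_idxOf_rmnAux (hUF : UmbrellaFree G) {x y : V} (hne : ¬ G.Adj x y)
    (hlt : y < x) (fuel : ℕ) (u : Finset V) (s : Option V) (hinv : RmnInvariant G u s)
    (hx : x ∈ u) (hy : y ∈ u) (hymem : y ∈ rmnAux G fuel u s) :
    (rmnAux G fuel u s).idxOf x < (rmnAux G fuel u s).idxOf y := by
  induction fuel generalizing u s with
  | zero => simp [rmnAux] at hymem
  | succ n ih =>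
    match s with
    | none =>
      have hu : u.Nonempty := ⟨x, hx⟩
      rw [rmnAux, dif_pos hu] at hymem ⊢
      have hym : y ≠ u.max' hu := (hlt.trans_le (u.le_max' x hx)).ne
      exact List.idxOf_lt_idxOf_cons hym fun hxm =>
        ih _ _ (rmnInvariant_restart hu) (mem_erase.2 ⟨hxm, hx⟩) (mem_erase.2 ⟨hym, hy⟩)
          ((List.mem_cons.1 hymem).resolve_left hym)
    | some c =>
      rw [rmnAux] at hymem ⊢
      by_cases hN : (u.filter (fun w => G.Adj c w)).Nonempty
      · rw [dif_pos hN] at hymem ⊢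
        set m := (u.filter (fun w => G.Adj c w)).max' hN
        have hym : y ≠ m := by
          rintro rfl
          have hcx := hinv.adj_of_adj hUF hx hne hlt (mem_filter.1 (max'_mem _ hN)).2
          exact absurd (le_max' _ x (mem_filter.2 ⟨hx, hcx⟩)) (not_le.2 hlt)
        exact List.idxOf_lt_idxOf_cons hym fun hxm =>
          ih _ _ (rmnInvariant_next hUF hinv hN) (mem_erase.2 ⟨hxm, hx⟩)
            (mem_erase.2 ⟨hym, hy⟩) ((List.mem_cons.1 hymem).resolve_left hym)
      · rw [dif_neg hN] at hymem ⊢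
        exact ih u none trivial hx hy hymem

end

/-- Lemma (auxil-2, RMN part): for an umbrella-free ordering π (the linear order on `V`),
if `xy ∉ E` and `y <_π x`, then `x` precedes `y` in `RMN(π)`. -/
theorem rmn_reverses_nonedges {V : Type*} [Fintype V] [LinearOrder V] (G : SimpleGraph V)
    (hUF : UmbrellaFree G) (x y : V) (hne : ¬ G.Adj x y) (hlt : y < x) :
    (rmn G).idxOf x < (rmn G).idxOf y := by
  have hy : y ∈ rmn G :=
    mem_rmnAux G _ univ none (by simp [card_univ]) (mem_univ y)
  exact idxOf_lt_idxOf_rmnAux hUF hne hlt _ univ none trivial (mem_univ x) (mem_univ y) hy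
end

section
/- Let G be a graph with umbrella-free ordering π and π′ = RMN(π). Let x, y ∈ V with y <_π x and y <_{π′} x. Then y is not the first vertex of π′, and the vertex z immediately preceding y in π′ satisfies y <_π x <_π z, zy ∈ E, and zx ∉ E. -/
/-!
Along the traversal, the current vertex `c` is adjacent to every unvisited vertex to its right.
This holds after a restart, since `c` is then the rightmost unvisited vertex, and it survives a
move from `c` to its rightmost unvisited neighbor `m`: an unvisited `w` with `m < w` lies left
of `c`, so the umbrella `m < w < c` forces `m ~ w`. Now if `y` precedes `x` in the traversal
with `y < x`, then `y` was not reached by a restart, which would pick a vertex `≥ x`; it was reached from some `z` as the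
rightmost unvisited neighbor of `z`, while `x` was still unvisited. Hence `z` is not adjacent
to `x`, and by the invariant `x < z`.
-/

namespace List

variable {α : Type*} [BEq α] [LawfulBEq α] {a b m : α} {l : List α}

theorem ne_of_idxOf_cons_lt (h : (m :: l).idxOf a < (m :: l).idxOf b) : b ≠ m := by
  rintro rfl
  simp at h

theorem idxOf_lt_idxOf_of_cons (ha : a ≠ m) (h : (m :: l).idxOf a < (m :: l).idxOf b) :
    l.idxOf a < l.idxOf b := by
  have hb : b ≠ m := ne_of_idxOf_cons_lt h
  rw [idxOf_cons_ne _ (Ne.symm ha), idxOf_cons_ne _ (Ne.symm hb)] at h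
  omega

end List

section RightmostNeighbor

variable {V : Type*} [LinearOrder V] {G : SimpleGraph V}

def AdjUnvisitedRight (G : SimpleGraph V) (u : Finset V) (c : V) : Prop :=
  c ∉ u ∧ ∀ w ∈ u, c < w → G.Adj c w

theorem adjUnvisitedRight_max' {u : Finset V} (hu : u.Nonempty) :
    AdjUnvisitedRight G (u.erase (u.max' hu)) (u.max' hu) :=
  ⟨u.notMem_erase _, fun w hw hlt => absurd (u.le_max' w (Finset.mem_of_mem_erase hw)) hlt.not_ge⟩

theorem AdjUnvisitedRight.lt_of_not_adj {u : Finset V} {c x : V} (hc : AdjUnvisitedRight G u c)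
    (hx : x ∈ u) (hcx : ¬ G.Adj c x) : x < c := by
  rcases lt_trichotomy x c with h | rfl | h
  · exact h
  · exact absurd hx hc.1
  · exact absurd (hc.2 x hx h) hcx

theorem AdjUnvisitedRight.erase_rightmost_adj (hUF : UmbrellaFree G) {u : Finset V} {c m : V}
    (hc : AdjUnvisitedRight G u c) (hcm : G.Adj c m)
    (hm_max : ∀ w ∈ u, G.Adj c w → w ≤ m) : AdjUnvisitedRight G (u.erase m) m := by
  refine ⟨u.notMem_erase m, fun w hw hmw => ?_⟩
  have hwu : w ∈ u := Finset.mem_of_mem_erase hw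
  have hcw : ¬ G.Adj c w := fun h => (hm_max w hwu h).not_gt hmw
  have hwc : w < c := hc.lt_of_not_adj hwu hcw
  exact (hUF m w c hmw hwc hcm.symm).resolve_right fun h => hcw h.symm

open Classical in
theorem exists_infix_rmnAux (hUF : UmbrellaFree G) {x y : V} (hlt : y < x) (fuel : ℕ)
    (u : Finset V) (c : Option V) (hc : ∀ cv ∈ c, AdjUnvisitedRight G u cv) (hx : x ∈ u)
    (hidx : (rmnAux G fuel u c).idxOf y < (rmnAux G fuel u c).idxOf x) :
    ∃ z, [z, y] <:+: c.toList ++ rmnAux G fuel u c ∧ x < z ∧ G.Adj z y ∧ ¬ G.Adj z x := by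
  induction fuel generalizing u c with
  | zero => simp [rmnAux] at hidx
  | succ fuel ih =>
    have visit : ∀ m ∈ u, AdjUnvisitedRight G (u.erase m) m → y ≠ m →
        (m :: rmnAux G fuel (u.erase m) (some m)).idxOf y <
          (m :: rmnAux G fuel (u.erase m) (some m)).idxOf x →
        ∃ z, [z, y] <:+: m :: rmnAux G fuel (u.erase m) (some m) ∧
          x < z ∧ G.Adj z y ∧ ¬ G.Adj z x := by
      intro m hm hm_inv hym hidx
      have hxm : x ≠ m := List.ne_of_idxOf_cons_lt hidx
      exact ih (u.erase m) (some m) (by simpa using hm_inv) (Finset.mem_erase.2 ⟨hxm, hx⟩)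
        (List.idxOf_lt_idxOf_of_cons hym hidx)
    cases c with
    | none =>
      have hu : u.Nonempty := ⟨x, hx⟩
      rw [rmnAux, dif_pos hu] at hidx ⊢
      exact visit _ (u.max'_mem hu) (adjUnvisitedRight_max' hu)
        (hlt.trans_le (u.le_max' x hx)).ne hidx
    | some c =>
      have hc : AdjUnvisitedRight G u c := hc c rfl
      rw [rmnAux] at hidx
      rw [rmnAux, Option.toList_some, List.singleton_append]
      split_ifs at hidx ⊢ with hne
      · set m := (u.filter (fun w => G.Adj c w)).max' hne
        obtain ⟨hm, hcm⟩ := Finset.mem_filter.1 (Finset.max'_mem _ hne)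
        have hm_max : ∀ w ∈ u, G.Adj c w → w ≤ m := fun w hw hcw =>
          Finset.le_max' _ w (Finset.mem_filter.2 ⟨hw, hcw⟩)
        by_cases hym : y = m
        · have hcx : ¬ G.Adj c x := fun h => (hm_max x hx h).not_gt (hym ▸ hlt)
          exact ⟨c, hym ▸ (List.prefix_append [c, m] _).isInfix, hc.lt_of_not_adj hx hcx,
            hym ▸ hcm, hcx⟩
        · obtain ⟨z, hzy, hz⟩ :=
            visit m hm (hc.erase_rightmost_adj hUF hcm hm_max) hym hidx
          exact ⟨z, List.infix_cons hzy, hz⟩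
      · obtain ⟨z, hzy, hz⟩ := ih u none (by simp) hx hidx
        exact ⟨z, List.infix_cons hzy, hz⟩

end RightmostNeighbor

/-- Lemma (auxil-3): for an umbrella-free ordering π (the linear order on `V`) and
π′ = RMN(π), if `y <_π x` and `y` precedes `x` in π′, then `y` is not the first vertex of
π′ and the vertex `z` immediately preceding `y` in π′ satisfies `y <_π x <_π z`,
`zy ∈ E` and `zx ∉ E`. -/
theorem rmn_previous_vertex {V : Type*} [Fintype V] [LinearOrder V] (G : SimpleGraph V)
    (hUF : UmbrellaFree G) (x y : V) (hlt : y < x)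
    (hprec : (rmn G).idxOf y < (rmn G).idxOf x) :
    (rmn G).head? ≠ some y ∧
    ∃ z : V, ∃ k : ℕ, (rmn G)[k]? = some z ∧ (rmn G)[k + 1]? = some y ∧
      x < z ∧ G.Adj z y ∧ ¬ G.Adj z x := by
  have hV : (Finset.univ : Finset V).Nonempty := ⟨x, Finset.mem_univ x⟩
  have hhead : (rmn G).head? = some (Finset.univ.max' hV) := by
    rw [rmn, rmnAux, dif_pos hV, List.head?_cons]
  refine ⟨fun hy => ?_, ?_⟩
  · rw [hhead, Option.some_inj] at hy
    exact (hy ▸ Finset.univ.le_max' x (Finset.mem_univ x)).not_gt hlt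
  · obtain ⟨z, hzy, hz⟩ : ∃ z, [z, y] <:+: rmn G ∧ x < z ∧ G.Adj z y ∧ ¬ G.Adj z x :=
      exists_infix_rmnAux hUF hlt _ Finset.univ none (by simp) (Finset.mem_univ x) hprec
    obtain ⟨k, -, hk⟩ := List.infix_iff_getElem?.1 hzy
    exact ⟨z, k, by simpa using hk 0 (by simp), by simpa [Nat.add_comm 1 k] using hk 1 (by simp),
      hz⟩
end

section
/- Let G be a cocomparability graph with LDFS umbrella-free ordering σ = (u₁,…,u_n,u_{n+1}), u_{n+1} an isolated dummy vertex, and G(i,j) the subgraph induced by {uᵢ,…,u_j} \ N(u_{j+1}). Then for every vertex u_x ∈ V(G(i+1,j)), V(G(i+1, x−1)) ⊆ V(G(i,j)). -/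
/-- The vertex set of `G(i,j)` (`0`-indexed): the vertices of σ = (u₀,…,u_{n-1},u_n)
(where `u_n` is the dummy isolated vertex) whose index lies in `[i, j]` and which are
not neighbors of `u_{j+1}`. For `i > j` this set is empty. -/
def Gset {n : ℕ} (G : SimpleGraph (Fin (n + 1))) (i j : ℕ) : Set (Fin (n + 1)) :=
  {v | i ≤ (v : ℕ) ∧ (v : ℕ) ≤ j ∧ ∀ w : Fin (n + 1), (w : ℕ) = j + 1 → ¬ G.Adj v w}

/-- For every vertex `u_x ∈ V(G(i+1,j))` we have `V(G(i+1, x-1)) ⊆ V(G(i,j))`. -/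
theorem Gset_between_subset {n : ℕ} (G : SimpleGraph (Fin (n + 1)))
    (hdummy : ∀ w, ¬ G.Adj (Fin.last n) w)
    (hUF : UmbrellaFree G) (hLDFS : LDFSOrdering G)
    (i j : ℕ) (hi : i < n) (hj : j < n) :
    ∀ ux ∈ Gset G (i + 1) j, Gset G (i + 1) ((ux : ℕ) - 1) ⊆ Gset G i j := by
  rintro ux ⟨hux1, hux2, hux3⟩ v ⟨hv1, hv2, hv3⟩
  refine ⟨by omega, by omega, ?_⟩
  intro w hw hadj
  have hvux : v < ux := by
    rw [Fin.lt_def]; omega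
  have huxw : ux < w := by
    rw [Fin.lt_def]; omega
  rcases hUF v ux w hvux huxw hadj with h | h
  · exact hv3 ux (by omega) h
  · exact hux3 w hw h
end

section
/- Let G be a cocomparability graph with LDFS umbrella-free ordering σ (augmented with an isolated dummy vertex u_{n+1}), and suppose uᵢ ∈ V(G(i,j)), u_x ∈ V(G(i+1,j)), u_y ∈ V(G(i+1,x−1)), and u_x ∈ N(uᵢ). If P₁ is a normal path of G(i+1,j) ending at u_x and P₂ is a normal path of G(i+1,x−1) ending at u_y, then P = (P₁, uᵢ, P₂) is a normal path of G(i,j) ending at u_y. In particular, the vertex sets of P₁ and P₂ are disjoint and every vertex of P₂ is adjacent to uᵢ. -/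
/-- `P = (v₁, v₂, …)` is typical (w.r.t. the ordering σ given by the linear order on `V`):
`v₁` is the rightmost vertex of `V(P)` in σ, and `v₂` is the rightmost vertex of
`N(v₁) ∩ V(P)` in σ. -/
def TypicalPath {V : Type*} [LinearOrder V] (G : SimpleGraph V) : List V → Prop
  | [] => True
  | [_] => True
  | v1 :: v2 :: rest =>
      (∀ v ∈ v1 :: v2 :: rest, v ≤ v1) ∧ (∀ v ∈ v2 :: rest, G.Adj v1 v → v ≤ v2)

/-- The "normality from each vertex on" condition: for any two consecutive vertices
`v_{i-1}, v_i` of the list, `v_i` is the rightmost vertex of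
`N(v_{i-1}) ∩ {v_i, …, v_k}` in σ. -/
def NormalFrom {V : Type*} [LinearOrder V] (G : SimpleGraph V) : List V → Prop
  | [] => True
  | [_] => True
  | a :: b :: rest =>
      (∀ v ∈ b :: rest, G.Adj a v → v ≤ b) ∧ NormalFrom G (b :: rest)

/-- `P` is a normal path of `G` (w.r.t. σ): a typical path such that each `v_i` is the
rightmost vertex of `N(v_{i-1}) ∩ {v_i, …, v_k}` in σ. -/
def NormalPath {V : Type*} [LinearOrder V] (G : SimpleGraph V) (P : List V) : Prop :=
  IsPathList G P ∧ (∀ h : P ≠ [], ∀ v ∈ P, v ≤ P.head h) ∧ NormalFrom G P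

/-- `P` is a normal path of the induced subgraph on the vertex set `S` (adjacency among
vertices of `P` in the induced subgraph coincides with adjacency in `G`). -/
def NormalPathIn {V : Type*} [LinearOrder V] (G : SimpleGraph V) (S : Set V)
    (P : List V) : Prop :=
  (∀ v ∈ P, v ∈ S) ∧ NormalPath G P


/-!
Every vertex `v` of `P₂` satisfies `uᵢ < v < u_x` and `v ≁ u_x`, so umbrella-freeness applied to
`uᵢ < v < u_x` forces `uᵢ ~ v`. On the other hand, umbrella-freeness propagates along a normal
path: every vertex of `P₁` to the left of its last vertex `u_x` is adjacent to `u_x`. Hence `P₁`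
and `P₂` are disjoint, and a vertex `a` of `P₁` adjacent to some `v ∈ P₂` cannot have its
successor `b` in `P₁` left of `v`: then `a ≁ u_x`, because `u_x` lies after `b` in `P₁` and
`u_x > v > b`, and each position of `a` relative to `u_x` gives a contradiction.
-/

theorem UmbrellaFree.adj_of_not_adj_right {V : Type*} [LinearOrder V] {G : SimpleGraph V}
    (hUF : UmbrellaFree G) {u v x : V} (huv : u < v) (hvx : v < x) (hux : G.Adj u x)
    (hnvx : ¬ G.Adj v x) : G.Adj u v :=
  (hUF u v x huv hvx hux).resolve_right hnvx

namespace NormalFrom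

variable {V : Type*} [LinearOrder V] {G : SimpleGraph V}

theorem tail {a : V} {l : List V} (h : NormalFrom G (a :: l)) : NormalFrom G l := by
  cases l with
  | nil => trivial
  | cons b r => exact h.2

theorem of_suffix {l₁ l₂ : List V} (hsuf : l₁ <:+ l₂) (h : NormalFrom G l₂) :
    NormalFrom G l₁ := by
  obtain ⟨pre, rfl⟩ := hsuf
  induction pre with
  | nil => exact h
  | cons a pre ih => exact ih h.tail

theorem append {L M : List V} (hL : NormalFrom G L) (hM : NormalFrom G M)
    (hmid : ∀ a b suf, a :: b :: suf <:+ L → ∀ v ∈ M, G.Adj a v → v ≤ b)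
    (hlast : ∀ a ∈ L.getLast?, ∀ b ∈ M.head?, ∀ v ∈ M, G.Adj a v → v ≤ b) :
    NormalFrom G (L ++ M) := by
  induction L with
  | nil => exact hM
  | cons a L ih =>
    cases L with
    | nil =>
      cases M with
      | nil => trivial
      | cons m M => exact ⟨hlast a rfl m rfl, hM⟩
    | cons b L =>
      refine ⟨fun v hv hav => ?_, ih hL.2 ?_ hlast⟩
      · rcases List.mem_cons.mp hv with rfl | hv
        · exact le_rfl
        rcases List.mem_append.mp hv with hv | hv
        · exact hL.1 v (List.mem_cons_of_mem b hv) hav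
        · exact hmid a b L List.suffix_rfl v hv hav
      · exact fun a' b' suf hsuf => hmid a' b' suf (hsuf.trans (List.suffix_cons a _))

/-- The induction behind `NormalPath.adj_getLast`, with head-maximality weakened to what
survives passing to the tail. -/
theorem adj_getLast (hUF : UmbrellaFree G) {z : V} :
    ∀ (a : V) (L : List V), (a :: L).IsChain G.Adj → NormalFrom G (a :: L) →
      (a :: L).getLast? = some z → (a < z → G.Adj a z) → ∀ p ∈ a :: L, p < z → G.Adj p z
  | a, [], _, _, hz, _, p, hp, hpz => by
    obtain rfl : a = z := by simpa using hz
    obtain rfl : p = a := List.mem_singleton.mp hp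
    exact absurd hpz (lt_irrefl p)
  | a, b :: L, hch, hnf, hz, ha, p, hp, hpz => by
    have hab : G.Adj a b := (List.isChain_cons_cons.mp hch).1
    have hzL : z ∈ b :: L := List.mem_of_getLast? (by simpa using hz)
    have hb : b < z → G.Adj b z := by
      intro hbz
      by_contra hnbz
      have haz : ¬ G.Adj a z := fun haz => (hnf.1 z hzL haz).not_gt hbz
      rcases lt_trichotomy a z with haz' | rfl | hza
      · exact haz (ha haz')
      · exact hnbz hab.symm
      · exact (hUF b z a hbz hza hab.symm).elim hnbz (fun h => haz h.symm)
    rcases List.mem_cons.mp hp with rfl | hp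
    · exact ha hpz
    · exact adj_getLast hUF b L (List.isChain_cons_cons.mp hch).2 hnf.tail
        (by simpa using hz) hb p hp hpz

end NormalFrom

namespace NormalPath

variable {V : Type*} [LinearOrder V] {G : SimpleGraph V}

theorem adj_getLast (hUF : UmbrellaFree G) {P : List V} (hP : NormalPath G P) {z : V}
    (hz : P.getLast? = some z) {p : V} (hp : p ∈ P) (hpz : p < z) : G.Adj p z := by
  obtain ⟨⟨-, hch⟩, hhead, hnf⟩ := hP
  cases P with
  | nil => simp at hz
  | cons a L =>
    have hza : z ≤ a := hhead (List.cons_ne_nil a L) z (List.mem_of_getLast? hz)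
    exact NormalFrom.adj_getLast hUF a L hch hnf hz (fun h => absurd hza h.not_ge) p hp hpz

theorem normalFrom_cons {P : List V} (hP : NormalPath G P) (u : V) :
    NormalFrom G (u :: P) := by
  obtain ⟨-, hhead, hnf⟩ := hP
  cases P with
  | nil => trivial
  | cons b L => exact ⟨fun v hv _ => hhead (List.cons_ne_nil b L) v hv, hnf⟩

variable {P₁ P₂ : List V} {u x : V}

theorem disjoint_of_lt_getLast (hUF : UmbrellaFree G) (hP₁ : NormalPath G P₁)
    (hx : P₁.getLast? = some x) (hP₂x : ∀ v ∈ P₂, v < x ∧ ¬ G.Adj v x) :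
    ∀ v ∈ P₁, v ∉ P₂ :=
  fun v hv₁ hv₂ => (hP₂x v hv₂).2 (hP₁.adj_getLast hUF hx hv₁ (hP₂x v hv₂).1)

theorem append_cons (hUF : UmbrellaFree G) (hP₁ : NormalPath G P₁)
    (hx : P₁.getLast? = some x) (hP₂ : NormalPath G P₂) (hux : G.Adj u x)
    (hu₁ : ∀ v ∈ P₁, u < v) (hu₂ : ∀ v ∈ P₂, u < v)
    (hP₂x : ∀ v ∈ P₂, v < x ∧ ¬ G.Adj v x) :
    NormalPath G (P₁ ++ u :: P₂) := by
  have hP₁ne : P₁ ≠ [] := by rintro rfl; simp at hx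
  have hxP₁ : x ∈ P₁ := List.mem_of_getLast? hx
  have hadj₂ : ∀ v ∈ P₂, G.Adj u v := fun v hv =>
    hUF.adj_of_not_adj_right (hu₂ v hv) (hP₂x v hv).1 hux (hP₂x v hv).2
  have hmid : ∀ a b suf, a :: b :: suf <:+ P₁ → ∀ v ∈ u :: P₂, G.Adj a v → v ≤ b := by
    intro a b suf hsuf v hv hav
    have hb₁ : b ∈ P₁ := hsuf.subset (by simp)
    rcases List.mem_cons.mp hv with rfl | hv₂
    · exact (hu₁ b hb₁).le
    by_contra! hbv
    obtain ⟨hvx, hnvx⟩ := hP₂x v hv₂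
    have hxsuf : x ∈ b :: suf := by
      obtain ⟨pre, rfl⟩ := hsuf
      exact List.mem_of_getLast? (by
        simpa [List.getLast?_append_of_ne_nil pre (List.cons_ne_nil a (b :: suf))] using hx)
    -- `b` is the rightmost neighbour of `a` after it, and `x` comes after `b` with `x > b`.
    have hnax : ¬ G.Adj a x := fun hax =>
      ((NormalFrom.of_suffix hsuf hP₁.2.2).1 x hxsuf hax).not_gt (hbv.trans hvx)
    rcases lt_trichotomy a x with hax | rfl | hxa
    · exact hnax (hP₁.adj_getLast hUF hx (hsuf.subset (by simp)) hax)
    · exact hnvx hav.symm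
    · exact (hUF v x a hvx hxa hav.symm).elim hnvx (fun h => hnax h.symm)
  refine ⟨⟨?_, ?_⟩, fun _ v hv => ?_, hP₁.2.2.append (hP₂.normalFrom_cons u) hmid ?_⟩
  · refine List.nodup_append.mpr ⟨hP₁.1.1, List.nodup_cons.mpr ⟨fun hu => ?_, hP₂.1.1⟩, ?_⟩
    · exact lt_irrefl u (hu₂ u hu)
    · rintro a ha b hb rfl
      rcases List.mem_cons.mp hb with rfl | hb
      · exact lt_irrefl a (hu₁ a ha)
      · exact disjoint_of_lt_getLast hUF hP₁ hx hP₂x a ha hb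
  · refine List.isChain_append.mpr ⟨hP₁.1.2, List.isChain_cons.mpr ⟨?_, hP₂.1.2⟩, ?_⟩
    · exact fun v hv => hadj₂ v (List.mem_of_mem_head? hv)
    · intro a ha b hb
      obtain rfl : a = x := by simpa [hx] using ha.symm
      obtain rfl : b = u := by simpa using hb.symm
      exact hux.symm
  · have hxhead : x ≤ P₁.head hP₁ne := hP₁.2.1 hP₁ne x hxP₁
    rw [List.head_append_of_ne_nil hP₁ne]
    rcases List.mem_append.mp hv with hv | hv
    · exact hP₁.2.1 hP₁ne v hv
    rcases List.mem_cons.mp hv with rfl | hv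
    · exact (hu₁ _ (List.head_mem hP₁ne)).le
    · exact ((hP₂x v hv).1.trans_le hxhead).le
  · intro a ha b hb v hv hav
    obtain rfl : a = x := by simpa [hx] using ha.symm
    obtain rfl : b = u := by simpa using hb.symm
    rcases List.mem_cons.mp hv with rfl | hv
    · exact le_rfl
    · exact absurd hav.symm (hP₂x v hv).2

end NormalPath

theorem Gset_mono {n : ℕ} (G : SimpleGraph (Fin (n + 1))) {i i' j : ℕ} (h : i ≤ i') :
    Gset G i' j ⊆ Gset G i j :=
  fun _ ⟨hi, hj, hnadj⟩ => ⟨h.trans hi, hj, hnadj⟩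

/-- Composition lemma: if `P₁` is a normal path of `G(i+1,j)` ending at `u_x` and `P₂` is a
normal path of `G(i+1,x-1)` ending at `u_y`, with `uᵢ ∈ V(G(i,j))` and `u_x ∈ N(uᵢ)`, then
`(P₁, uᵢ, P₂)` is a normal path of `G(i,j)` ending at `u_y`; in particular `P₁` and `P₂`
are vertex-disjoint and every vertex of `P₂` is adjacent to `uᵢ`. -/
theorem normal_path_compose {n : ℕ} (G : SimpleGraph (Fin (n + 1)))
    (hUF : UmbrellaFree G)
    (i j : ℕ) (hi : i < n)
    (ux uy : Fin (n + 1))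
    (hui : (⟨i, by omega⟩ : Fin (n + 1)) ∈ Gset G i j)
    (hux : ux ∈ Gset G (i + 1) j)
    (hadj : G.Adj (⟨i, by omega⟩ : Fin (n + 1)) ux)
    (P₁ P₂ : List (Fin (n + 1)))
    (hP₁ : NormalPathIn G (Gset G (i + 1) j) P₁)
    (hP₁x : P₁.getLast? = some ux)
    (hP₂ : NormalPathIn G (Gset G (i + 1) ((ux : ℕ) - 1)) P₂)
    (hP₂y : P₂.getLast? = some uy) :
    NormalPathIn G (Gset G i j) (P₁ ++ (⟨i, by omega⟩ : Fin (n + 1)) :: P₂) ∧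
    (P₁ ++ (⟨i, by omega⟩ : Fin (n + 1)) :: P₂).getLast? = some uy ∧
    (∀ v ∈ P₁, v ∉ P₂) ∧
    (∀ v ∈ P₂, G.Adj (⟨i, by omega⟩ : Fin (n + 1)) v) := by
  set ui : Fin (n + 1) := ⟨i, by omega⟩
  obtain ⟨hux₁, huxj, huxnadj⟩ := hux
  have hP₂x : ∀ v ∈ P₂, v < ux ∧ ¬ G.Adj v ux := fun v hv =>
    have ⟨_, hv, hvnadj⟩ := hP₂.1 v hv
    ⟨Fin.lt_def.mpr (by omega), hvnadj ux (by omega)⟩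
  have hu₂ : ∀ v ∈ P₂, ui < v := fun v hv => Fin.lt_def.mpr (hP₂.1 v hv).1
  have hadj₂ : ∀ v ∈ P₂, G.Adj ui v := fun v hv =>
    hUF.adj_of_not_adj_right (hu₂ v hv) (hP₂x v hv).1 hadj (hP₂x v hv).2
  -- `v < u_x < u_{j+1}` with `v ≁ u_x` and `u_x ≁ u_{j+1}`, so `v ≁ u_{j+1}` by umbrella-freeness.
  have hP₂ij : ∀ v ∈ P₂, v ∈ Gset G i j := fun v hv =>
    have ⟨hiv, hvx, _⟩ := hP₂.1 v hv
    ⟨by omega, by omega, fun w hw hvw =>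
      (hUF v ux w (hP₂x v hv).1 (Fin.lt_def.mpr (by omega)) hvw).elim (hP₂x v hv).2
        (huxnadj w hw)⟩
  refine ⟨⟨fun v hv => ?_, hP₁.2.append_cons hUF hP₁x hP₂.2 hadj
      (fun v hv => Fin.lt_def.mpr (hP₁.1 v hv).1) hu₂ hP₂x⟩, ?_,
    NormalPath.disjoint_of_lt_getLast hUF hP₁.2 hP₁x hP₂x, hadj₂⟩
  · rcases List.mem_append.mp hv with hv | hv
    · exact Gset_mono G (Nat.le_succ i) (hP₁.1 v hv)
    rcases List.mem_cons.mp hv with rfl | hv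
    · exact hui
    · exact hP₂ij v hv
  · have hP₂ne : P₂ ≠ [] := by rintro rfl; simp at hP₂y
    rw [List.getLast?_append_of_ne_nil _ (List.cons_ne_nil _ _), List.getLast?_cons, hP₂y]
    rfl
end
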